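/- Let F be a finite field, A a nonempty finite subset of F, b₀ ∈ F with b₀ ≠ 0, N ≥ 1 a real number, and elements a_{ji} ∈ F for j = 1, 2, 3, 4 and i = 0, 1, each nonzero, such that |a_{ji}·A ∩ b₀·A| ≥ N for all j, i. Then |Σ_{i=0}^{1} Σ_{j=0}^{1} (−1)^{i+j} a_{1i} a_{2j}·A + Σ_{i=0}^{1} Σ_{j=0}^{1} (−1)^{i+j} a_{3i} a_{4j}·A| ≤ |A+A|^{32} / (N^{16} |A|^{15}), where the displayed set is the eight-fold signed sumset of the dilates (−1)^{i+j} a_{1i}a_{2j}·A and (−1)^{i+j} a_{3i}a_{4j}·A. -/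

import Mathlib

/-!
Ruzsa's triangle inequality through `X ∩ Z` gives `|Y + X| |X ∩ Z| ≤ |Y + Z| |X + X|`. With
`X = (e a) • A` and `Z = (e b₀) • A` this replaces a summand `(e a) • A` of a sumset by
`(e b₀) • A` at the cost of a factor `|A + A| / |a • A ∩ b₀ • A| ≤ |A + A| / N`. Two such
replacements turn `± aᵢ aⱼ • A` into `± b₀² • A`, so the eight-fold signed sumset has at most
`(|A + A| / N)¹⁶ |4B - 4B|` elements, where `B = b₀² • A`, and Plünnecke–Ruzsa gives
`|4B - 4B| ≤ (|A + A| / |A|)⁸ |A|`.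
-/

open Pointwise Finset

namespace Finset

theorem card_add_mul_card_inter_le {G : Type*} [AddCommGroup G] [DecidableEq G]
    (Y X Z : Finset G) : #(Y + X) * #(X ∩ Z) ≤ #(Y + Z) * #(X + X) :=
  (ruzsa_triangle_inequality_add_add_add Y (X ∩ Z) X).trans <|
    Nat.mul_le_mul (card_le_card (add_subset_add_left inter_subset_right))
      (card_le_card (add_subset_add_right inter_subset_left))

variable {F : Type*} [Field F] [DecidableEq F]

theorem card_add_smul_mul_le (A Y : Finset F) {e : F} (he : e ≠ 0) (a b : F) :
    #(Y + (e * a) • A) * #(a • A ∩ b • A) ≤ #(Y + (e * b) • A) * #(A + A) :=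
  calc #(Y + (e * a) • A) * #(a • A ∩ b • A)
      = #(Y + (e * a) • A) * #((e * a) • A ∩ (e * b) • A) := by
        rw [mul_smul, mul_smul, ← smul_finset_inter₀ he, card_smul_finset₀ he]
    _ ≤ #(Y + (e * b) • A) * #((e * a) • A + (e * a) • A) := card_add_mul_card_inter_le _ _ _
    _ ≤ #(Y + (e * b) • A) * #(A + A) := by
        rw [← smul_add]
        exact Nat.mul_le_mul_left _ card_smul_finset_le

theorem card_add_smul_mul_le_mul_div (A Y : Finset F) {e : F} (he : e ≠ 0) {a b : F} {N : ℝ}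
    (hN : 0 < N) (hab : N ≤ #(a • A ∩ b • A)) :
    (#(Y + (e * a) • A) : ℝ) ≤ #(Y + (e * b) • A) * (#(A + A) / N) := by
  rw [← mul_div_assoc, le_div_iff₀ hN]
  calc (#(Y + (e * a) • A) : ℝ) * N ≤ #(Y + (e * a) • A) * #(a • A ∩ b • A) := by gcongr
    _ ≤ #(Y + (e * b) • A) * #(A + A) := mod_cast card_add_smul_mul_le A Y he a b

theorem card_add_smul_mul_mul_le (A Y : Finset F) {b ε u : F} (hb : b ≠ 0) (hε : ε ≠ 0)
    (hu : u ≠ 0) (v : F) {N : ℝ} (hN : 0 < N) (hub : N ≤ #(u • A ∩ b • A))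
    (hvb : N ≤ #(v • A ∩ b • A)) :
    (#(Y + (ε * u * v) • A) : ℝ) ≤ #(Y + (ε * b * b) • A) * (#(A + A) / N) ^ 2 :=
  calc (#(Y + (ε * u * v) • A) : ℝ)
      ≤ #(Y + (ε * u * b) • A) * (#(A + A) / N) :=
        card_add_smul_mul_le_mul_div A Y (mul_ne_zero hε hu) hN hvb
    _ = #(Y + (ε * b * u) • A) * (#(A + A) / N) := by rw [mul_right_comm]
    _ ≤ #(Y + (ε * b * b) • A) * (#(A + A) / N) * (#(A + A) / N) := by
        gcongr
        exact card_add_smul_mul_le_mul_div A Y (mul_ne_zero hε hb) hN hub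
    _ = #(Y + (ε * b * b) • A) * (#(A + A) / N) ^ 2 := by ring

theorem card_add_sum_smul_le (A : Finset F) {b : F} (hb : b ≠ 0) {N : ℝ} (hN : 0 < N) :
    ∀ l : List (F × F × F),
      (∀ t ∈ l, t.1 ≠ 0 ∧ t.2.1 ≠ 0 ∧ N ≤ #(t.2.1 • A ∩ b • A) ∧ N ≤ #(t.2.2 • A ∩ b • A)) →
      ∀ Y : Finset F, (#(Y + (l.map fun t => (t.1 * t.2.1 * t.2.2) • A).sum) : ℝ) ≤
        #(Y + (l.map fun t => (t.1 * b * b) • A).sum) * (#(A + A) / N) ^ (2 * l.length)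
  | [], _, Y => by simp
  | (ε, u, v) :: l, hl, Y => by
    obtain ⟨hε, hu, hub, hvb⟩ := hl (ε, u, v) (List.mem_cons_self ..)
    have ih := card_add_sum_smul_le A hb hN l (fun s hs ↦ hl s (List.mem_cons_of_mem _ hs))
    set S := (l.map fun t => (t.1 * t.2.1 * t.2.2) • A).sum
    set S' := (l.map fun t => (t.1 * b * b) • A).sum
    set K := (#(A + A) / N : ℝ)
    have head : (#(Y + S' + (ε * u * v) • A) : ℝ) ≤ #(Y + S' + (ε * b * b) • A) * K ^ 2 :=
      card_add_smul_mul_mul_le A _ hb hε hu v hN hub hvb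
    simp only [List.map_cons, List.sum_cons, List.length_cons, ← add_assoc]
    calc (#(Y + (ε * u * v) • A + S) : ℝ) ≤ #(Y + (ε * u * v) • A + S') * K ^ (2 * l.length) :=
          ih _
      _ ≤ #(Y + (ε * b * b) • A + S') * K ^ 2 * K ^ (2 * l.length) := by
        rw [add_right_comm Y S', add_right_comm Y S'] at head
        exact mul_le_mul_of_nonneg_right head (by positivity)
      _ = #(Y + (ε * b * b) • A + S') * K ^ (2 * (l.length + 1)) := by ring

theorem card_nsmul_sub_nsmul_smul_le {A : Finset F} (hA : A.Nonempty) {c : F} (hc : c ≠ 0)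
    (m n : ℕ) :
    (#(m • (c • A) - n • (c • A)) : ℝ) ≤ (#(A + A) / #A : ℝ) ^ (m + n) * #A := by
  have h := pluennecke_ruzsa_inequality_nsmul_sub_nsmul_add (hA.smul_finset (a := c)) (c • A) m n
  rw [← smul_add, card_smul_finset₀ hc, card_smul_finset₀ hc] at h
  simpa using (NNRat.cast_le (K := ℝ)).2 h

def signedProducts (u₀ u₁ v₀ v₁ : F) : List (F × F × F) :=
  [(1, u₀, v₀), (-1, u₀, v₁), (-1, u₁, v₀), (1, u₁, v₁)]

theorem sum_map_smul_signedProducts (A : Finset F) (u₀ u₁ v₀ v₁ : F) :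
    ((signedProducts u₀ u₁ v₀ v₁).map fun t => (t.1 * t.2.1 * t.2.2) • A).sum =
      (u₀ * v₀) • A - (u₀ * v₁) • A - (u₁ * v₀) • A + (u₁ * v₁) • A := by
  simp only [signedProducts, List.map_cons, List.map_nil, List.sum_cons, List.sum_nil, one_mul,
    neg_mul, neg_smul_finset, add_zero, sub_eq_add_neg]
  ac_rfl

theorem sum_map_smul_signedProducts_eq_nsmul_sub_nsmul (A : Finset F) (u₀ u₁ v₀ v₁ b : F) :
    ((signedProducts u₀ u₁ v₀ v₁).map fun t => (t.1 * b * b) • A).sum =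
      2 • ((b * b) • A) - 2 • ((b * b) • A) := by
  simp only [signedProducts, List.map_cons, List.map_nil, List.sum_cons, List.sum_nil, one_mul,
    neg_mul, neg_smul_finset, add_zero, sub_eq_add_neg, ← neg_nsmul]
  generalize (b * b) • A = B
  generalize -B = B'
  abel

end Finset

theorem garaev_case_three_estimate_general {F : Type*} [Field F] [DecidableEq F]
    (A : Finset F) (hA : A.Nonempty) (b₀ : F) (hb₀ : b₀ ≠ 0) (N : ℝ) (hN : 1 ≤ N)
    (a₁₀ a₁₁ a₂₀ a₂₁ a₃₀ a₃₁ a₄₀ a₄₁ : F)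
    (h₁₀ : a₁₀ ≠ 0) (h₁₁ : a₁₁ ≠ 0)
    (h₃₀ : a₃₀ ≠ 0) (h₃₁ : a₃₁ ≠ 0)
    (hc₁₀ : N ≤ ((a₁₀ • A ∩ b₀ • A).card : ℝ)) (hc₁₁ : N ≤ ((a₁₁ • A ∩ b₀ • A).card : ℝ))
    (hc₂₀ : N ≤ ((a₂₀ • A ∩ b₀ • A).card : ℝ)) (hc₂₁ : N ≤ ((a₂₁ • A ∩ b₀ • A).card : ℝ))
    (hc₃₀ : N ≤ ((a₃₀ • A ∩ b₀ • A).card : ℝ)) (hc₃₁ : N ≤ ((a₃₁ • A ∩ b₀ • A).card : ℝ))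
    (hc₄₀ : N ≤ ((a₄₀ • A ∩ b₀ • A).card : ℝ)) (hc₄₁ : N ≤ ((a₄₁ • A ∩ b₀ • A).card : ℝ)) :
    (((a₁₀ * a₂₀) • A - (a₁₀ * a₂₁) • A - (a₁₁ * a₂₀) • A + (a₁₁ * a₂₁) • A +
        ((a₃₀ * a₄₀) • A - (a₃₀ * a₄₁) • A - (a₃₁ * a₄₀) • A + (a₃₁ * a₄₁) • A)).card : ℝ) ≤
      ((A + A).card : ℝ) ^ 32 / (N ^ 16 * (A.card : ℝ) ^ 15) := by
  have hl : ∀ t ∈ signedProducts a₁₀ a₁₁ a₂₀ a₂₁ ++ signedProducts a₃₀ a₃₁ a₄₀ a₄₁,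
      t.1 ≠ 0 ∧ t.2.1 ≠ 0 ∧ N ≤ #(t.2.1 • A ∩ b₀ • A) ∧ N ≤ #(t.2.2 • A ∩ b₀ • A) := by
    simp [signedProducts, *]
  have hsum := card_add_sum_smul_le A hb₀ (by linarith) _ hl 0
  simp only [zero_add, List.map_append, List.sum_append, sum_map_smul_signedProducts,
    sum_map_smul_signedProducts_eq_nsmul_sub_nsmul, sub_add_sub_comm, ← add_nsmul,
    Nat.reduceAdd] at hsum
  have hA₀ : (0 : ℝ) < #A := mod_cast hA.card_pos
  have hAA : (#A : ℝ) ≤ #(A + A) := mod_cast card_le_card_add_left hA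
  calc _ ≤ (#(4 • ((b₀ * b₀) • A) - 4 • ((b₀ * b₀) • A)) : ℝ) * (#(A + A) / N) ^ 16 := hsum
    _ ≤ (#(A + A) / #A : ℝ) ^ 8 * #A * (#(A + A) / N) ^ 16 := by
        gcongr
        exact card_nsmul_sub_nsmul_smul_le hA (mul_ne_zero hb₀ hb₀) _ _
    _ ≤ (#(A + A) / #A : ℝ) ^ 16 * #A * (#(A + A) / N) ^ 16 := by
        gcongr
        · exact (one_le_div hA₀).2 hAA
        · norm_num
    _ = ((A + A).card : ℝ) ^ 32 / (N ^ 16 * (A.card : ℝ) ^ 15) := by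
        field_simp

/-- Key estimate in the third case of the Main Theorem: the eight-fold signed sumset
`Σᵢⱼ(−1)^{i+j} a₁ᵢa₂ⱼ A + Σᵢⱼ(−1)^{i+j} a₃ᵢa₄ⱼ A` has cardinality at most
`|A+A|³² / (N¹⁶|A|¹⁵)`. Here `a₁₀, a₁₁, …, a₄₁` play the roles of `a_{ji}`. -/
theorem garaev_case_three_estimate {F : Type*} [Field F] [Fintype F] [DecidableEq F]
    (A : Finset F) (hA : A.Nonempty) (b₀ : F) (hb₀ : b₀ ≠ 0) (N : ℝ) (hN : 1 ≤ N)
    (a₁₀ a₁₁ a₂₀ a₂₁ a₃₀ a₃₁ a₄₀ a₄₁ : F)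
    (h₁₀ : a₁₀ ≠ 0) (h₁₁ : a₁₁ ≠ 0) (h₂₀ : a₂₀ ≠ 0) (h₂₁ : a₂₁ ≠ 0)
    (h₃₀ : a₃₀ ≠ 0) (h₃₁ : a₃₁ ≠ 0) (h₄₀ : a₄₀ ≠ 0) (h₄₁ : a₄₁ ≠ 0)
    (hc₁₀ : N ≤ ((a₁₀ • A ∩ b₀ • A).card : ℝ)) (hc₁₁ : N ≤ ((a₁₁ • A ∩ b₀ • A).card : ℝ))
    (hc₂₀ : N ≤ ((a₂₀ • A ∩ b₀ • A).card : ℝ)) (hc₂₁ : N ≤ ((a₂₁ • A ∩ b₀ • A).card : ℝ))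
    (hc₃₀ : N ≤ ((a₃₀ • A ∩ b₀ • A).card : ℝ)) (hc₃₁ : N ≤ ((a₃₁ • A ∩ b₀ • A).card : ℝ))
    (hc₄₀ : N ≤ ((a₄₀ • A ∩ b₀ • A).card : ℝ)) (hc₄₁ : N ≤ ((a₄₁ • A ∩ b₀ • A).card : ℝ)) :
    (((a₁₀ * a₂₀) • A - (a₁₀ * a₂₁) • A - (a₁₁ * a₂₀) • A + (a₁₁ * a₂₁) • A +
        ((a₃₀ * a₄₀) • A - (a₃₀ * a₄₁) • A - (a₃₁ * a₄₀) • A + (a₃₁ * a₄₁) • A)).card : ℝ) ≤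
      ((A + A).card : ℝ) ^ 32 / (N ^ 16 * (A.card : ℝ) ^ 15) :=
  garaev_case_three_estimate_general A hA b₀ hb₀ N hN a₁₀ a₁₁ a₂₀ a₂₁ a₃₀ a₃₁ a₄₀ a₄₁ h₁₀ h₁₁ h₃₀
    h₃₁ hc₁₀ hc₁₁ hc₂₀ hc₂₁ hc₃₀ hc₃₁ hc₄₀ hc₄₁
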